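/- Let $r \geq 2$ and $A > 0$ be real numbers and $x \geq 1$. Then the number of positive integers $n \leq x$ whose $r$-smooth part $\prod_{p^\alpha \| n,\ p \leq r} p^\alpha$ exceeds $r^A$ is at most $C \cdot x/A$ for some absolute constant $C > 0$. -/

import Mathlib

/-!
Write `s_r(n)` for the `r`-smooth part of `n`. It is completely multiplicative, so
`∏_{n ≤ N} s_r(n) = s_r(N!)`, and Legendre's formula `v_p(N!) ≤ N/(p-1) ≤ 2N/p` gives
`log s_r(N!) ≤ 2N ∑_{p ≤ r} log p / p ≤ 6 N log r` by Mertens' estimate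
`∑_{p ≤ M} log p / p ≤ log M + log 4`. Markov's inequality applied to `log s_r(n)` with threshold
`A log r` then bounds the count by `6N / A`.
-/

open scoped Classical
open Finset Real
open scoped Nat

theorem Finset.card_filter_mul_le_sum {ι R : Type*} [Semiring R] [PartialOrder R]
    [IsOrderedRing R] (s : Finset ι) (p : ι → Prop) [DecidablePred p] {f : ι → R} {t : R}
    (hf : ∀ i ∈ s, 0 ≤ f i) (ht : ∀ i ∈ s, p i → t ≤ f i) :
    (#(s.filter p) : R) * t ≤ ∑ i ∈ s, f i :=
  calc (#(s.filter p) : R) * t = #(s.filter p) • t := (nsmul_eq_mul _ _).symm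
    _ ≤ ∑ i ∈ s.filter p, f i := card_nsmul_le_sum _ _ _ fun i hi ↦ by
        rw [mem_filter] at hi; exact ht i hi.1 hi.2
    _ ≤ ∑ i ∈ s, f i := sum_le_sum_of_subset_of_nonneg (filter_subset _ _) fun i hi _ ↦ hf i hi

noncomputable def smoothPart (r : ℝ) (n : ℕ) : ℕ :=
  ∏ p ∈ n.primeFactors.filter (fun p : ℕ => (p : ℝ) ≤ r), p ^ n.factorization p

theorem smoothPart_eq_prod_primesLE (r : ℝ) (n : ℕ) :
    smoothPart r n = ∏ p ∈ Nat.primesLE ⌊r⌋₊, p ^ n.factorization p := by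
  have mem_primesLE {p : ℕ} (hp : p.Prime) : p ∈ Nat.primesLE ⌊r⌋₊ ↔ (p : ℝ) ≤ r := by
    rw [Nat.mem_primesLE, Nat.le_floor_iff' hp.ne_zero, and_iff_left hp]
  refine prod_subset (fun p hp ↦ ?_) fun p hp hpn ↦ ?_
  · obtain ⟨hpn, hpr⟩ := mem_filter.mp hp
    exact (mem_primesLE (Nat.prime_of_mem_primeFactors hpn)).mpr hpr
  · have hpr := (mem_primesLE (Nat.prime_of_mem_primesLE hp)).mp hp
    have hsupp : p ∉ n.factorization.support := by
      rw [Nat.support_factorization]; exact fun h ↦ hpn (mem_filter.mpr ⟨h, hpr⟩)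
    rw [Finsupp.notMem_support_iff.mp hsupp, pow_zero]

theorem smoothPart_mul (r : ℝ) {m n : ℕ} (hm : m ≠ 0) (hn : n ≠ 0) :
    smoothPart r (m * n) = smoothPart r m * smoothPart r n := by
  simp only [smoothPart_eq_prod_primesLE, Nat.factorization_mul hm hn, Finsupp.add_apply, pow_add,
    prod_mul_distrib]

theorem prod_smoothPart_Icc (r : ℝ) (N : ℕ) : ∏ n ∈ Icc 1 N, smoothPart r n = smoothPart r N ! := by
  induction N with
  | zero => simp [smoothPart]
  | succ N ih =>
    rw [prod_Icc_succ_top (by omega), ih, Nat.factorial_succ,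
      smoothPart_mul r N.succ_ne_zero N.factorial_ne_zero, mul_comm]

theorem smoothPart_factorial (N : ℕ) : smoothPart N N ! = N ! := by
  rw [smoothPart, filter_true_of_mem fun p hp ↦ ?_, ← Nat.prod_factorization_eq_prod_primeFactors,
    Nat.prod_factorization_pow_eq_self N.factorial_ne_zero]
  exact_mod_cast (Nat.prime_of_mem_primeFactors hp).dvd_factorial.mp
    (Nat.dvd_of_mem_primeFactors hp)

theorem smoothPart_pos (r : ℝ) (n : ℕ) : 0 < smoothPart r n := by
  rw [smoothPart_eq_prod_primesLE]
  exact prod_pos fun p hp ↦ pow_pos (Nat.prime_of_mem_primesLE hp).pos _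

theorem log_smoothPart (r : ℝ) (n : ℕ) :
    log (smoothPart r n) = ∑ p ∈ Nat.primesLE ⌊r⌋₊, n.factorization p * log p := by
  rw [smoothPart_eq_prod_primesLE, Nat.cast_prod, log_prod fun p hp ↦ by
    have := (Nat.prime_of_mem_primesLE hp).pos; positivity]
  simp only [Nat.cast_pow, log_pow]

theorem div_le_factorization_factorial {p : ℕ} (hp : p.Prime) (N : ℕ) :
    N / p ≤ (N !).factorization p := by
  have := Fact.mk hp
  rw [Nat.factorization_def _ hp, padicValNat_factorial (b := Nat.log p N + 2) (by omega)]
  simpa using single_le_sum (f := fun i ↦ N / p ^ i) (fun _ _ ↦ Nat.zero_le _)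
    (by simp : 1 ∈ Ico 1 (Nat.log p N + 2))

theorem factorization_factorial_le {p : ℕ} (hp : p.Prime) (N : ℕ) :
    ((N !).factorization p : ℝ) ≤ 2 * N / p := by
  have := Fact.mk hp
  have hle : (p - 1) * (N !).factorization p ≤ N := by
    rw [Nat.factorization_def _ hp, sub_one_mul_padicValNat_factorial]
    exact Nat.sub_le _ _
  have hp2 : (2 : ℝ) ≤ p := by exact_mod_cast hp.two_le
  have hle' := (Nat.cast_le (α := ℝ)).mpr hle
  push_cast [Nat.cast_sub hp.one_le] at hle'
  rw [le_div_iff₀ (by positivity)]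
  nlinarith [((N !).factorization p).cast_nonneg (α := ℝ)]

theorem sum_primesLE_log_div_le (M : ℕ) :
    ∑ p ∈ Nat.primesLE M, log p / p ≤ log M + log 4 := by
  rcases M.eq_zero_or_pos with rfl | hM
  · rw [Nat.primesLE_zero, sum_empty, Nat.cast_zero, log_zero, zero_add]
    positivity
  have hM' : (0 : ℝ) < M := by exact_mod_cast hM
  have hlog_factorial : log (M ! : ℕ) = ∑ p ∈ Nat.primesLE M, (M !).factorization p * log p := by
    have := log_smoothPart M (M !)
    rwa [smoothPart_factorial, Nat.floor_natCast] at this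
  refine le_of_mul_le_mul_left ?_ hM'
  calc M * ∑ p ∈ Nat.primesLE M, log p / p
      = ∑ p ∈ Nat.primesLE M, (M : ℝ) / p * log p := by
        rw [mul_sum]; exact sum_congr rfl fun p _ ↦ by ring
    _ ≤ ∑ p ∈ Nat.primesLE M, (((M / p : ℕ) : ℝ) + 1) * log p := by
        gcongr with p
        rw [← Nat.floor_div_eq_div (K := ℝ)]; exact (Nat.lt_floor_add_one _).le
    _ ≤ ∑ p ∈ Nat.primesLE M, (((M !).factorization p : ℝ) + 1) * log p := by
        gcongr with p hp
        exact div_le_factorization_factorial (Nat.prime_of_mem_primesLE hp) M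
    _ = log (M !) + Chebyshev.theta M := by
        rw [Chebyshev.theta_eq_sum_primesLE_log, hlog_factorial, ← sum_add_distrib]
        exact sum_congr rfl fun p _ ↦ by ring
    _ ≤ M * log M + log 4 * M := by
        gcongr
        · rw [← log_pow, ← Nat.cast_pow]
          exact log_le_log (by positivity) (by exact_mod_cast M.factorial_le_pow)
        · exact Chebyshev.theta_le_log4_mul_x hM'.le
    _ = M * (log M + log 4) := by ring

theorem log_smoothPart_factorial_le {r : ℝ} (hr : 2 ≤ r) (N : ℕ) :
    log (smoothPart r N !) ≤ 6 * N * log r := by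
  have hr0 : 0 < r := by linarith
  have hM : 1 ≤ ⌊r⌋₊ := Nat.le_floor (by push_cast; linarith)
  have hlog_floor : log ⌊r⌋₊ ≤ log r :=
    log_le_log (by exact_mod_cast hM) (Nat.floor_le hr0.le)
  have hlog_four : log 4 ≤ 2 * log r := by
    rw [show (4 : ℝ) = 2 ^ 2 by norm_num, log_pow, Nat.cast_ofNat]
    gcongr
  calc log (smoothPart r N !)
      = ∑ p ∈ Nat.primesLE ⌊r⌋₊, ((N !).factorization p : ℝ) * log p := log_smoothPart r _
    _ ≤ ∑ p ∈ Nat.primesLE ⌊r⌋₊, 2 * N / p * log p := by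
        gcongr with p hp
        exact factorization_factorial_le (Nat.prime_of_mem_primesLE hp) N
    _ = 2 * N * ∑ p ∈ Nat.primesLE ⌊r⌋₊, log p / p := by
        rw [mul_sum]; exact sum_congr rfl fun p _ ↦ by ring
    _ ≤ 2 * N * (log r + 2 * log r) := by
        gcongr
        exact (sum_primesLE_log_div_le _).trans (add_le_add hlog_floor hlog_four)
    _ = 6 * N * log r := by ring

theorem stmt2 :
    ∃ C : ℝ, 0 < C ∧ ∀ (r A x : ℝ), 2 ≤ r → 0 < A → 1 ≤ x →
      (((Finset.Icc 1 ⌊x⌋₊).filter (fun n =>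
          ((∏ p ∈ n.primeFactors.filter (fun p => (p : ℝ) ≤ r),
              p ^ (n.factorization p) : ℕ) : ℝ) > r ^ A)).card : ℝ)
        ≤ C * x / A := by
  refine ⟨6, by norm_num, fun r A x hr hA hx => ?_⟩
  change (#((Icc 1 ⌊x⌋₊).filter fun n ↦ (smoothPart r n : ℝ) > r ^ A) : ℝ) ≤ 6 * x / A
  have hr0 : 0 < r := by linarith
  have hcount : (#((Icc 1 ⌊x⌋₊).filter fun n ↦ (smoothPart r n : ℝ) > r ^ A) : ℝ) * (A * log r)
      ≤ 6 * x * log r := calc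
    _ ≤ ∑ n ∈ Icc 1 ⌊x⌋₊, log (smoothPart r n) := by
      refine card_filter_mul_le_sum _ _ (fun n _ ↦ log_natCast_nonneg _) fun n _ h ↦ ?_
      rw [← log_rpow hr0]
      exact log_le_log (by positivity) h.le
    _ = log (smoothPart r ⌊x⌋₊ !) := by
      rw [← prod_smoothPart_Icc, Nat.cast_prod, log_prod fun n _ ↦ by
        exact_mod_cast (smoothPart_pos r n).ne']
    _ ≤ 6 * ⌊x⌋₊ * log r := log_smoothPart_factorial_le hr _
    _ ≤ 6 * x * log r := by gcongr; exacts [log_nonneg (by linarith), Nat.floor_le (by linarith)]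
  rw [le_div_iff₀ hA]
  exact le_of_mul_le_mul_right (by rwa [mul_assoc]) (log_pos (by linarith))
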